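/- Given two elements a, b of L with a < b in the lectic order, there is no element strictly between a and a ⊕ i when i = min Δ_{a,b} satisfies a <_i b and a ⊕ i ≤ b; formally, if a <_i b then a ⊕ i is ≤ every c with a < c ≤ b and a <_i c. -/

import Mathlib

open scoped Classical

variable {L ι : Type*}

/-- Δ_{a,b}: indices whose generator is below exactly one of `a`, `b`. -/
def Delta [SemilatticeSup L] (x : ι → L) (a b : L) : Set ι :=
  {j | (x j ≤ a ∧ ¬ x j ≤ b) ∨ (¬ x j ≤ a ∧ x j ≤ b)}

/-- `a <_i b`: `i` is the minimum of `Δ_{a,b}` and `x i ≤ b`. -/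
def LtAt [SemilatticeSup L] [LinearOrder ι] (x : ι → L) (a b : L) (i : ι) : Prop :=
  i ∈ Delta x a b ∧ (∀ j ∈ Delta x a b, i ≤ j) ∧ x i ≤ b

/-- The lectic strict order: `a < b` iff `a <_i b` for some `i`. -/
def LexLt [SemilatticeSup L] [LinearOrder ι] (x : ι → L) (a b : L) : Prop :=
  ∃ i, LtAt x a b i

/-- The (reflexive) lectic order. -/
def LexLe [SemilatticeSup L] [LinearOrder ι] (x : ι → L) (a b : L) : Prop :=
  a = b ∨ LexLt x a b

/-- `{x i | i}` generates `L`: every element is a join of a nonempty subfamily. -/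
def Generates [SemilatticeSup L] (x : ι → L) : Prop :=
  ∀ a : L, ∃ s : Finset ι, ∃ h : s.Nonempty, a = s.sup' h x

/-- `a ⊕ i = (⋁_{j <_I i, x j ≤ a} x j) ∨ x i`. -/
noncomputable def oplus [SemilatticeSup L] [LinearOrder ι] [Fintype ι]
    (x : ι → L) (a : L) (i : ι) : L :=
  (insert i (Finset.univ.filter fun j => j < i ∧ x j ≤ a)).sup'
    (Finset.insert_nonempty _ _) x

/-
The generators joined into `a ⊕ i` are `x i` and the `x j` with `j < i` below `a`; all of them lie
below `c`, because `i` is the first index where `a` and `c` differ and `x i ≤ c`. So `a ⊕ i ≤ c`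
in `L`, and the lattice order refines the lectic one: if `d < c` in `L`, the first index where `d`
and `c` differ (which exists since both are joins of generators) carries a generator below `c`.
-/

section SemilatticeSup

variable [SemilatticeSup L] {x : ι → L}

theorem Generates.le_of_forall_le_imp (hgen : Generates x) {a b : L}
    (h : ∀ j, x j ≤ a → x j ≤ b) : a ≤ b := by
  obtain ⟨s, hs, rfl⟩ := hgen a
  exact Finset.sup'_le hs x fun j hj => h j (Finset.le_sup' x hj)

theorem Generates.delta_nonempty (hgen : Generates x) {a b : L} (hab : a ≠ b) :
    (Delta x a b).Nonempty := by
  by_contra hempty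
  have hiff : ∀ j, x j ≤ a ↔ x j ≤ b := fun j => by
    by_contra hj
    exact hempty ⟨j, by unfold Delta; tauto⟩
  exact hab (le_antisymm (hgen.le_of_forall_le_imp fun j => (hiff j).1)
    (hgen.le_of_forall_le_imp fun j => (hiff j).2))

variable [LinearOrder ι] [WellFoundedLT ι]

theorem Generates.lexLt_of_lt (hgen : Generates x) {a b : L} (hab : a < b) :
    LexLt x a b := by
  have hne := hgen.delta_nonempty hab.ne
  set k := wellFounded_lt.min (Delta x a b) hne
  have hk : k ∈ Delta x a b := wellFounded_lt.min_mem _ hne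
  have hkb : x k ≤ b := by
    rcases hk with ⟨hka, hkb⟩ | ⟨-, hkb⟩
    · exact absurd (hka.trans hab.le) hkb
    · exact hkb
  exact ⟨k, hk, fun j hj => not_lt.mp (wellFounded_lt.not_lt_min _ hj), hkb⟩

theorem Generates.lexLe_of_le (hgen : Generates x) {a b : L} (hab : a ≤ b) :
    LexLe x a b :=
  (eq_or_lt_of_le hab).imp id hgen.lexLt_of_lt

end SemilatticeSup

theorem oplus_le_of_ltAt [SemilatticeSup L] [LinearOrder ι] [Fintype ι] {x : ι → L}
    {a c : L} {i : ι} (hac : LtAt x a c i) : oplus x a i ≤ c := by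
  obtain ⟨-, hmin, hic⟩ := hac
  refine Finset.sup'_le _ x fun j hj => ?_
  rcases Finset.mem_insert.mp hj with rfl | hj
  · exact hic
  · obtain ⟨hji, hja⟩ := (Finset.mem_filter.mp hj).2
    by_contra hjc
    exact (hmin j (Or.inl ⟨hja, hjc⟩)).not_gt hji

theorem oplus_le_of_between_general [SemilatticeSup L] [LinearOrder ι] [Fintype ι]
    (x : ι → L) (hgen : Generates x) (a b : L) (i : ι) :
    ∀ c : L, LexLt x a c → LexLe x c b → LtAt x a c i →
      LexLe x (oplus x a i) c :=
  fun _ _ _ hac => hgen.lexLe_of_le (oplus_le_of_ltAt hac)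

theorem oplus_le_of_between [SemilatticeSup L] [LinearOrder ι] [Fintype ι]
    (x : ι → L) (hgen : Generates x) (a b : L) (i : ι)
    (hab : LtAt x a b i) :
    ∀ c : L, LexLt x a c → LexLe x c b → LtAt x a c i →
      LexLe x (oplus x a i) c :=
  oplus_le_of_between_general x hgen a b i
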